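/- Let m ≥ 2, let c : Fin m → ℝ² be any cyclic sequence of points, and let x ∈ ℝ². If x lies strictly to the right of every directed edge of the cycle, i.e., det(c (i+1 mod m) − c i, x − c i) < 0 for every i ∈ Fin m, then x ∈ convexHull (range c). Equivalently, every point outside convexHull (range c) lies in the closed left halfplane of some directed edge of the cycle. -/

import Mathlib

open Set Metric

noncomputable abbrev Pt := EuclideanSpace ℝ (Fin 2)

/-- The planar determinant `det(u,v) = u₁·v₂ − u₂·v₁`. -/
def detv (u v : Pt) : ℝ := u 0 * v 1 - u 1 * v 0

set_option maxHeartbeats 1000000 in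
theorem stmt_9 (m : ℕ) (hm : 2 ≤ m) (c : Fin m → Pt) (x : Pt)
    (hx : ∀ i : Fin m, detv (c (i + ⟨1, by omega⟩) - c i) (x - c i) < 0) :
    x ∈ convexHull ℝ (Set.range c) := by
  by_contra hxh
  obtain ⟨f, s, hfx, hfc⟩ := geometric_hahn_banach_point_closed
    (convex_convexHull ℝ _) ((Set.finite_range c).isClosed_convexHull ℝ) hxh
  set e0 : Pt := EuclideanSpace.single (0 : Fin 2) (1 : ℝ) with he0
  set e1 : Pt := EuclideanSpace.single (1 : Fin 2) (1 : ℝ) with he1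
  set u0 : ℝ := f e0 with hu0
  set u1 : ℝ := f e1 with hu1
  have hf : ∀ v : Pt, f v = u0 * v 0 + u1 * v 1 := by
    intro v
    have hv : v = v 0 • e0 + v 1 • e1 := by
      ext i
      fin_cases i <;>
        simp [he0, he1, EuclideanSpace.single_apply]
    calc f v = f (v 0 • e0 + v 1 • e1) := by rw [← hv]
      _ = u0 * v 0 + u1 * v 1 := by
          simp [map_add, map_smul, hu0, hu1]; ring
  -- coordinates of c i - x
  set p : Fin m → ℝ := fun i => c i 0 - x 0 with hp
  set q : Fin m → ℝ := fun i => c i 1 - x 1 with hq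
  set a : Fin m → ℝ := fun i => u0 * p i + u1 * q i with ha
  set b : Fin m → ℝ := fun i => -u1 * p i + u0 * q i with hb
  have hapos : ∀ i, 0 < a i := by
    intro i
    have h1 : s < f (c i) := hfc _ (subset_convexHull ℝ _ ⟨i, rfl⟩)
    have h2 : f (c i) - f x = a i := by
      have := hf (c i - x)
      simp only [PiLp.sub_apply] at this
      rw [map_sub] at this
      simp [ha, hp, hq, this]
    nlinarith
  set t : Fin m → ℝ := fun i => b i / a i with ht
  have one_lt : (1 : ℕ) < m := by omega
  have hstep : ∀ i : Fin m, t (i + ⟨1, by omega⟩) < t i := by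
    intro i
    set j : Fin m := i + ⟨1, by omega⟩ with hj
    have hdet := hx i
    rw [← hj] at hdet
    have hD : detv (c j - c i) (x - c i) = p i * q j - q i * p j := by
      simp only [detv, PiLp.sub_apply]
      simp only [hp, hq]
      ring
    have hkey : a i * b j - a j * b i = (u0 ^ 2 + u1 ^ 2) * (p i * q j - q i * p j) := by
      simp only [ha, hb]; ring
    have hu2 : 0 < u0 ^ 2 + u1 ^ 2 := by
      rcases lt_or_eq_of_le (by positivity : (0:ℝ) ≤ u0 ^ 2 + u1 ^ 2) with h | h
      · exact h
      · exfalso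
        have hu00 : u0 = 0 := by nlinarith
        have hu10 : u1 = 0 := by nlinarith
        have := hapos i
        simp [ha, hu00, hu10] at this
    rw [hD] at hdet
    have hlt : a i * b j - a j * b i < 0 := by nlinarith
    show b j / a j < b i / a i
    rw [div_lt_div_iff₀ (hapos j) (hapos i)]
    nlinarith
  -- cyclic strict descent contradiction
  have key : ∀ k, ∀ hk : k < m, t ⟨k, hk⟩ ≤ t ⟨0, by omega⟩ := by
    intro k
    induction k with
    | zero => intro hk; exact le_refl _
    | succ n ih =>
      intro hk
      have hn : n < m := by omega
      have hadd : (⟨n, hn⟩ : Fin m) + ⟨1, by omega⟩ = ⟨n + 1, hk⟩ := by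
        apply Fin.ext
        show (n + 1) % m = n + 1
        exact Nat.mod_eq_of_lt hk
      have := hstep ⟨n, hn⟩
      rw [hadd] at this
      exact le_of_lt (lt_of_lt_of_le this (ih hn))
  have hm1 : m - 1 < m := by omega
  have hwrap : (⟨m - 1, hm1⟩ : Fin m) + ⟨1, by omega⟩ = ⟨0, by omega⟩ := by
    apply Fin.ext
    show (m - 1 + 1) % m = 0
    have hms : m - 1 + 1 = m := by omega
    rw [hms]
    exact Nat.mod_self m
  have h1 := hstep ⟨m - 1, hm1⟩
  rw [hwrap] at h1
  have h2 := key (m - 1) hm1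
  linarith
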